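/- Let N be a positive integer, x ∈ F_N a word, and β ∈ ℤ/Nℤ. (i) If α ∈ (ℤ/Nℤ)^× is a unit, then the word αβx (α, then β, prepended to x) lies in Ā if and only if the word (β − α⁻¹)x lies in Ā. (ii) The word 0βx lies in Ā if and only if x lies in Ā. -/

import Mathlib

/-- The monoid homomorphism π sending a word α₁…α_l over ℤ/Nℤ to the matrix product
[[0,1],[−1,α₁]] ⋯ [[0,1],[−1,α_l]]. -/
def piWordN (N : ℕ) (w : List (ZMod N)) : Matrix (Fin 2) (Fin 2) (ZMod N) :=
  (w.map fun α => !![0, 1; -1, α]).prod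

/-- Ā : the words whose image under π has (2,2)-entry equal to 0. -/
def Abar (N : ℕ) : Set (List (ZMod N)) :=
  {w | piWordN N w 1 1 = 0}

/-!
The second row of `[[0,1],[-1,u]] * [[0,1],[-1,β]]` is `(-u, uβ - 1)`, which is `u` times the second
row `(-1, β - u⁻¹)` of `[[0,1],[-1,β - u⁻¹]]`; for `u = 0` it is `(0, -1)`, minus the second row of
the identity. Multiplying on the right by `π x` preserves these row relations, so the `(2,2)`-entries
in question differ by the factor `u`, resp. `-1`, and one vanishes iff the other does.
-/

section ContinuantMatrix

variable {R : Type*} [CommRing R]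

def continuantMatrix (a : R) : Matrix (Fin 2) (Fin 2) R := !![0, 1; -1, a]

lemma continuantMatrix_units_mul_mul_apply_one_one (u : Rˣ) (β : R)
    (M : Matrix (Fin 2) (Fin 2) R) :
    (continuantMatrix (u : R) * (continuantMatrix β * M)) 1 1 =
      u * (continuantMatrix (β - ↑u⁻¹) * M) 1 1 := by
  simp only [continuantMatrix, Matrix.mul_apply, Fin.sum_univ_two, Matrix.of_apply,
    Matrix.cons_val', Matrix.cons_val_zero, Matrix.cons_val_one, Matrix.empty_val',
    Matrix.cons_val_fin_one]
  linear_combination M 1 1 * u.mul_inv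

lemma continuantMatrix_zero_mul_mul_apply_one_one (β : R) (M : Matrix (Fin 2) (Fin 2) R) :
    (continuantMatrix (0 : R) * (continuantMatrix β * M)) 1 1 = -M 1 1 := by
  simp only [continuantMatrix, Matrix.mul_apply, Fin.sum_univ_two, Matrix.of_apply,
    Matrix.cons_val', Matrix.cons_val_zero, Matrix.cons_val_one, Matrix.empty_val',
    Matrix.cons_val_fin_one]
  ring

end ContinuantMatrix

lemma piWordN_cons (N : ℕ) (a : ZMod N) (w : List (ZMod N)) :
    piWordN N (a :: w) = continuantMatrix a * piWordN N w := by
  simp [piWordN, continuantMatrix]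

lemma mem_Abar_iff (N : ℕ) (w : List (ZMod N)) : w ∈ Abar N ↔ piWordN N w 1 1 = 0 := Iff.rfl

theorem stmt14_general (N : ℕ) (x : List (ZMod N)) (β : ZMod N) :
    (∀ α : (ZMod N)ˣ,
      ((α : ZMod N) :: β :: x ∈ Abar N ↔ (β - ((α⁻¹ : (ZMod N)ˣ) : ZMod N)) :: x ∈ Abar N)) ∧
    ((0 : ZMod N) :: β :: x ∈ Abar N ↔ x ∈ Abar N) := by
  refine ⟨fun α => ?_, ?_⟩
  · rw [mem_Abar_iff, mem_Abar_iff, piWordN_cons, piWordN_cons, piWordN_cons,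
      continuantMatrix_units_mul_mul_apply_one_one, Units.mul_right_eq_zero]
  · rw [mem_Abar_iff, mem_Abar_iff, piWordN_cons, piWordN_cons,
      continuantMatrix_zero_mul_mul_apply_one_one, neg_eq_zero]

theorem stmt14 (N : ℕ) (hN : 0 < N) (x : List (ZMod N)) (β : ZMod N) :
    (∀ α : (ZMod N)ˣ,
      ((α : ZMod N) :: β :: x ∈ Abar N ↔ (β - ((α⁻¹ : (ZMod N)ˣ) : ZMod N)) :: x ∈ Abar N)) ∧
    ((0 : ZMod N) :: β :: x ∈ Abar N ↔ x ∈ Abar N) :=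
  stmt14_general N x β
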